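/- arXiv:2605.05415 — 5 statements merged into one kernel-verified Lean document; each statement's English description precedes it below -/
import Mathlib

section
/- Let n ≥ 1, let p : Fin n → ℝ be a probability vector with p i > 0 for all i, and let L : Fin n → ℝ. For any probability vector q on Fin n define KL(q‖p) = Σ_i q i * log (q i / p i) (with the convention 0 · log 0 = 0). Then for all ε > 0 and κ > 0, sup { Σ_i q i * L i − κ · KL(q‖p) : q a probability vector on Fin n with KL(q‖p) ≤ ε } = inf { λ·ε + (λ+κ) · log (Σ_i p i * exp (L i / (λ+κ))) : λ ≥ 0 }. -/
/-!
For every temperature `β > 0` the Gibbs variational inequality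
`∑ q L - β KL(q‖p) ≤ β log ∑ p exp (L / β)` holds, with equality at the exponentially tilted
distribution `q ∝ p exp (L / β)`. With `β = λ + κ` and `λ KL(q‖p) ≤ λ ε` on the KL ball this is
weak duality. For strong duality, `λ ↦ KL(tilt_{λ+κ}‖p)` is continuous on `λ ≥ 0` and tends to
`KL(p‖p) = 0`, so by the intermediate value theorem some `λ ≥ 0` puts the tilted distribution in
the ball with complementary slackness `λ (KL - ε) = 0`; there primal and dual values coincide.
-/

open Real Finset Filter Topology

theorem csSup_eq_csInf_of_mem_of_forall_le {α : Type*} [ConditionallyCompleteLattice α]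
    {S D : Set α} {a : α} (haS : a ∈ S) (haD : a ∈ D) (h : ∀ x ∈ S, ∀ y ∈ D, x ≤ y) :
    sSup S = sInf D :=
  (IsGreatest.csSup_eq ⟨haS, fun x hx => h x hx a haD⟩).trans
    (IsLeast.csInf_eq ⟨haD, fun y hy => h a haS y hy⟩).symm

theorem exists_le_and_eq_or_eq_of_tendsto {g : ℝ → ℝ} {a c ε : ℝ}
    (hg : ContinuousOn g (Set.Ici a)) (hlim : Tendsto g atTop (𝓝 c)) (hc : c < ε) :
    ∃ t, a ≤ t ∧ g t ≤ ε ∧ (t = a ∨ g t = ε) := by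
  by_cases ha : g a ≤ ε
  · exact ⟨a, le_rfl, ha, Or.inl rfl⟩
  obtain ⟨M, haM, hM⟩ := ((eventually_ge_atTop a).and (hlim.eventually (gt_mem_nhds hc))).exists
  obtain ⟨t, ht, hgt⟩ := intermediate_value_Icc' haM (hg.mono Set.Icc_subset_Ici_self)
    ⟨hM.le, (not_le.1 ha).le⟩
  exact ⟨t, ht.1, hgt.le, Or.inr hgt⟩

theorem Real.mul_log_div_le_mul_log_add {q a Z : ℝ} (hq : 0 ≤ q) (ha : 0 < a) (hZ : 0 < Z) :
    q * log (a / q) ≤ q * log Z + (a / Z - q) := by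
  rcases hq.eq_or_lt with rfl | hq
  · simpa using (div_pos ha hZ).le
  have h := log_le_sub_one_of_pos (show 0 < a / q / Z by positivity)
  rw [log_div (by positivity) hZ.ne'] at h
  calc q * log (a / q) ≤ q * (log Z + (a / q / Z - 1)) := by gcongr; linarith
    _ = q * log Z + (a / Z - q) := by field_simp

theorem Real.mul_log_div_eq_mul_log_sub {x y : ℝ} (hy : y ≠ 0) :
    x * log (x / y) = x * log x - x * log y := by
  rcases eq_or_ne x 0 with rfl | hx
  · simp
  rw [log_div hx hy, mul_sub]

theorem Real.mul_sub_mul_mul_log_div_eq {x y l β : ℝ} (hx : 0 ≤ x) (hy : 0 < y) (hβ : β ≠ 0) :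
    x * l - β * (x * log (x / y)) = β * (x * log (y * exp (l / β) / x)) := by
  rcases hx.eq_or_lt with rfl | hx
  · simp
  rw [log_div (by positivity) hx.ne', log_div hx.ne' hy.ne', log_mul hy.ne' (exp_pos _).ne',
    log_exp]
  field_simp
  ring

section

variable {ι : Type*} [Fintype ι]

theorem Real.sum_mul_log_div_le_log_sum {q a : ι → ℝ} (hq : ∀ i, 0 ≤ q i)
    (hq1 : ∑ i, q i = 1) (ha : ∀ i, 0 < a i) :
    ∑ i, q i * log (a i / q i) ≤ log (∑ i, a i) := by
  have hι : (univ : Finset ι).Nonempty := nonempty_of_sum_ne_zero (by rw [hq1]; exact one_ne_zero)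
  have hZ : 0 < ∑ i, a i := sum_pos (fun i _ => ha i) hι
  calc ∑ i, q i * log (a i / q i)
      ≤ ∑ i, (q i * log (∑ j, a j) + (a i / ∑ j, a j - q i)) :=
        sum_le_sum fun i _ => mul_log_div_le_mul_log_add (hq i) (ha i) hZ
    _ = log (∑ i, a i) := by
        rw [sum_add_distrib, sum_sub_distrib, ← sum_mul, ← sum_div, hq1, div_self hZ.ne']
        ring

noncomputable def discreteKL (q p : ι → ℝ) : ℝ :=
  ∑ i, q i * log (q i / p i)

noncomputable def tilted (p L : ι → ℝ) (β : ℝ) (i : ι) : ℝ :=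
  p i * exp (L i / β) / ∑ j, p j * exp (L j / β)

theorem discreteKL_self (p : ι → ℝ) : discreteKL p p = 0 := by
  refine sum_eq_zero fun i _ => ?_
  rcases eq_or_ne (p i) 0 with h | h <;> simp [h]

variable {p q : ι → ℝ} (L : ι → ℝ)

theorem continuous_discreteKL (hp : ∀ i, p i ≠ 0) : Continuous fun q => discreteKL q p := by
  simp only [discreteKL, mul_log_div_eq_mul_log_sub (hp _)]
  exact continuous_finsetSum _ fun i _ =>
    (continuous_mul_log.comp (continuous_apply i)).sub ((continuous_apply i).mul continuous_const)

theorem sum_mul_sub_mul_discreteKL_le (hp : ∀ i, 0 < p i) (hq : ∀ i, 0 ≤ q i)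
    (hq1 : ∑ i, q i = 1) {β : ℝ} (hβ : 0 < β) :
    ∑ i, q i * L i - β * discreteKL q p ≤ β * log (∑ i, p i * exp (L i / β)) := by
  calc ∑ i, q i * L i - β * discreteKL q p
      = β * ∑ i, q i * log (p i * exp (L i / β) / q i) := by
        rw [discreteKL, mul_sum, mul_sum, ← sum_sub_distrib]
        exact sum_congr rfl fun i _ => mul_sub_mul_mul_log_div_eq (hq i) (hp i) hβ.ne'
    _ ≤ β * log (∑ i, p i * exp (L i / β)) :=
        mul_le_mul_of_nonneg_left
          (sum_mul_log_div_le_log_sum hq hq1 fun i => by have := hp i; positivity) hβ.le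

theorem sum_mul_sub_mul_discreteKL_le_dual (hp : ∀ i, 0 < p i) (hq : ∀ i, 0 ≤ q i)
    (hq1 : ∑ i, q i = 1) {ε κ lam : ℝ} (hKL : discreteKL q p ≤ ε) (hlam : 0 ≤ lam)
    (hκ : 0 < κ) :
    ∑ i, q i * L i - κ * discreteKL q p ≤
      lam * ε + (lam + κ) * log (∑ i, p i * exp (L i / (lam + κ))) := by
  have := sum_mul_sub_mul_discreteKL_le L hp hq hq1 (by positivity : 0 < lam + κ)
  linarith [mul_le_mul_of_nonneg_left hKL hlam]

theorem tendsto_tilted_atTop (hp : ∑ i, p i = 1) : Tendsto (tilted p L) atTop (𝓝 p) := by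
  have h : ∀ j, Tendsto (fun β => p j * exp (L j / β)) atTop (𝓝 (p j)) := fun j => by
    simpa using tendsto_const_nhds.mul
      ((continuous_exp.tendsto 0).comp (tendsto_const_nhds.div_atTop tendsto_id))
  have hZ := tendsto_finsetSum univ fun j _ => h j
  rw [hp] at hZ
  exact tendsto_pi_nhds.2 fun i => by simpa [tilted, Pi.div_def] using (h i).div hZ one_ne_zero

variable [Nonempty ι]

theorem sum_mul_exp_pos (hp : ∀ i, 0 < p i) (β : ℝ) : 0 < ∑ i, p i * exp (L i / β) :=
  sum_pos (fun i _ => mul_pos (hp i) (exp_pos _)) univ_nonempty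

theorem tilted_pos (hp : ∀ i, 0 < p i) (β : ℝ) (i : ι) : 0 < tilted p L β i :=
  div_pos (mul_pos (hp i) (exp_pos _)) (sum_mul_exp_pos L hp β)

theorem sum_tilted (hp : ∀ i, 0 < p i) (β : ℝ) : ∑ i, tilted p L β i = 1 := by
  simp only [tilted]
  rw [← sum_div, div_self (sum_mul_exp_pos L hp β).ne']

theorem log_tilted_div (hp : ∀ i, 0 < p i) (β : ℝ) (i : ι) :
    log (tilted p L β i / p i) = L i / β - log (∑ j, p j * exp (L j / β)) := by
  rw [tilted, div_right_comm, mul_div_cancel_left₀ _ (hp i).ne',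
    log_div (exp_pos _).ne' (sum_mul_exp_pos L hp β).ne', log_exp]

theorem sum_tilted_mul_sub_mul_discreteKL_tilted (hp : ∀ i, 0 < p i) {β : ℝ} (hβ : β ≠ 0) :
    ∑ i, tilted p L β i * L i - β * discreteKL (tilted p L β) p =
      β * log (∑ i, p i * exp (L i / β)) := by
  simp only [discreteKL, log_tilted_div L hp, mul_sub, sum_sub_distrib, ← sum_mul,
    sum_tilted L hp, one_mul, ← mul_div_assoc, ← sum_div]
  field_simp
  ring

theorem continuousOn_tilted (hp : ∀ i, 0 < p i) : ContinuousOn (tilted p L) {0}ᶜ := by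
  have h : ∀ j, ContinuousOn (fun β => p j * exp (L j / β)) {0}ᶜ := fun j =>
    continuousOn_const.mul ((continuousOn_const.div continuousOn_id fun _ => id).rexp)
  exact continuousOn_pi.2 fun i => (h i).div (continuousOn_finsetSum _ fun j _ => h j)
    fun β _ => (sum_mul_exp_pos L hp β).ne'

theorem exists_discreteKL_tilted_le (hp : ∀ i, 0 < p i) (hp1 : ∑ i, p i = 1) {κ ε : ℝ}
    (hκ : 0 < κ) (hε : 0 < ε) :
    ∃ β, κ ≤ β ∧ discreteKL (tilted p L β) p ≤ ε ∧
      (β = κ ∨ discreteKL (tilted p L β) p = ε) := by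
  refine exists_le_and_eq_or_eq_of_tendsto ?_ ?_ ((discreteKL_self p).symm ▸ hε)
  · exact (continuous_discreteKL fun i => (hp i).ne').comp_continuousOn
      ((continuousOn_tilted L hp).mono fun β (hβ : κ ≤ β) => (hκ.trans_le hβ).ne')
  · exact ((continuous_discreteKL fun i => (hp i).ne').tendsto p).comp (tendsto_tilted_atTop L hp1)

end

theorem kl_dro_duality_general (n : ℕ) (p : Fin n → ℝ)
    (hp_pos : ∀ i, 0 < p i) (hp_sum : ∑ i, p i = 1)
    (L : Fin n → ℝ) (ε κ : ℝ) (hε : 0 < ε) (hκ : 0 < κ) :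
    sSup {x : ℝ | ∃ q : Fin n → ℝ, (∀ i, 0 ≤ q i) ∧ (∑ i, q i = 1) ∧
        (∑ i, q i * Real.log (q i / p i)) ≤ ε ∧
        x = (∑ i, q i * L i) - κ * (∑ i, q i * Real.log (q i / p i))} =
    sInf {x : ℝ | ∃ lam : ℝ, 0 ≤ lam ∧
        x = lam * ε + (lam + κ) * Real.log (∑ i, p i * Real.exp (L i / (lam + κ)))} := by
  have : Nonempty (Fin n) :=
    univ_nonempty_iff.1 (nonempty_of_sum_ne_zero (by rw [hp_sum]; exact one_ne_zero))
  obtain ⟨β, hκβ, hKL, hslack⟩ := exists_discreteKL_tilted_le L hp_pos hp_sum hκ hε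
  have hβ : 0 < β := hκ.trans_le hκβ
  refine csSup_eq_csInf_of_mem_of_forall_le
    (a := (β - κ) * ε + β * log (∑ i, p i * exp (L i / β))) ?_ ?_ ?_
  · refine ⟨tilted p L β, fun i => (tilted_pos L hp_pos β i).le, sum_tilted L hp_pos β, hKL, ?_⟩
    have hval := sum_tilted_mul_sub_mul_discreteKL_tilted L hp_pos hβ.ne'
    have hslack' : (β - κ) * discreteKL (tilted p L β) p = (β - κ) * ε := by
      rcases hslack with rfl | h
      · simp
      · rw [h]
    change _ = _ - κ * discreteKL (tilted p L β) p
    linarith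
  · exact ⟨β - κ, by linarith, by rw [sub_add_cancel]⟩
  · rintro x ⟨q, hq, hq1, hKLq, rfl⟩ y ⟨lam, hlam, rfl⟩
    exact sum_mul_sub_mul_discreteKL_le_dual L hp_pos hq hq1 hKLq hlam hκ

/-- KL-case of the DRO duality (Theorem A.1, KL case):
the constrained supremum of the penalized linear objective over the KL ball
equals the infimum of the log-sum-exp dual objective over `λ ≥ 0`. -/
theorem kl_dro_duality (n : ℕ) (hn : 1 ≤ n) (p : Fin n → ℝ)
    (hp_pos : ∀ i, 0 < p i) (hp_sum : ∑ i, p i = 1)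
    (L : Fin n → ℝ) (ε κ : ℝ) (hε : 0 < ε) (hκ : 0 < κ) :
    sSup {x : ℝ | ∃ q : Fin n → ℝ, (∀ i, 0 ≤ q i) ∧ (∑ i, q i = 1) ∧
        (∑ i, q i * Real.log (q i / p i)) ≤ ε ∧
        x = (∑ i, q i * L i) - κ * (∑ i, q i * Real.log (q i / p i))} =
    sInf {x : ℝ | ∃ lam : ℝ, 0 ≤ lam ∧
        x = lam * ε + (lam + κ) * Real.log (∑ i, p i * Real.exp (L i / (lam + κ)))} :=
  kl_dro_duality_general n p hp_pos hp_sum L ε κ hε hκ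
end

section
/- Let n ≥ 1, let p : Fin n → ℝ be a probability vector with p i > 0 for all i, let L : Fin n → ℝ, let ε > 0 and κ > 0, and let g : ℝ → ℝ be convex. Then the function (λ, ρ) ↦ λ·ε + ρ + (λ+κ) · Σ_i p i * g((L i − ρ)/(λ+κ)) is convex on the set { (λ, ρ) : λ ≥ 0, ρ ∈ ℝ }. -/
/-!
The objective is an affine function of `(λ, ρ)` plus a nonnegative combination of the maps
`(λ, ρ) ↦ (λ + κ) g((L i - ρ) / (λ + κ))`. Each of these is the perspective `(t, z) ↦ t g(z / t)`
of `g`, which is jointly convex on `t > 0`, precomposed with the affine map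
`(λ, ρ) ↦ (λ + κ, L i - ρ)`; since `κ > 0`, that map sends the half-plane `λ ≥ 0` into `t > 0`.
-/

open Set

theorem ConvexOn.perspective {E : Type*} [AddCommGroup E] [Module ℝ E] {g : E → ℝ}
    (hg : ConvexOn ℝ univ g) :
    ConvexOn ℝ (Ioi 0 ×ˢ univ) fun x : ℝ × E => x.1 * g (x.1⁻¹ • x.2) := by
  refine ⟨(convex_Ioi 0).prod convex_univ, ?_⟩
  rintro ⟨t₁, z₁⟩ ⟨ht₁, -⟩ ⟨t₂, z₂⟩ ⟨ht₂, -⟩ a b ha hb hab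
  simp only [mem_Ioi] at ht₁ ht₂
  simp only [Prod.smul_mk, Prod.mk_add_mk, smul_eq_mul]
  have ht : 0 < a * t₁ + b * t₂ := by
    rcases ha.eq_or_lt with rfl | ha
    · simp_all
    · positivity
  set t := a * t₁ + b * t₂ with ht_def
  have hmix : t⁻¹ • (a • z₁ + b • z₂) =
      (a * t₁ / t) • (t₁⁻¹ • z₁) + (b * t₂ / t) • (t₂⁻¹ • z₂) := by
    simp only [smul_add, smul_smul]
    congr 2 <;> field_simp
  have hjensen := hg.2 (mem_univ (t₁⁻¹ • z₁)) (mem_univ (t₂⁻¹ • z₂))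
    (by positivity : 0 ≤ a * t₁ / t) (by positivity : 0 ≤ b * t₂ / t)
    (by rw [← add_div, ← ht_def, div_self ht.ne'])
  rw [← hmix, smul_eq_mul, smul_eq_mul] at hjensen
  calc t * g (t⁻¹ • (a • z₁ + b • z₂))
      ≤ t * (a * t₁ / t * g (t₁⁻¹ • z₁) + b * t₂ / t * g (t₂⁻¹ • z₂)) := by gcongr
    _ = a * (t₁ * g (t₁⁻¹ • z₁)) + b * (t₂ * g (t₂⁻¹ • z₂)) := by field_simp

theorem ConvexOn.perspective_comp_shift {g : ℝ → ℝ} (hg : ConvexOn ℝ univ g) {κ : ℝ}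
    (hκ : 0 < κ) (c : ℝ) :
    ConvexOn ℝ {x : ℝ × ℝ | 0 ≤ x.1} fun x => (x.1 + κ) * g ((c - x.2) / (x.1 + κ)) := by
  let shift : ℝ × ℝ →ᵃ[ℝ] ℝ × ℝ :=
    (LinearMap.prodMap LinearMap.id (-LinearMap.id)).toAffineMap + AffineMap.const ℝ _ (κ, c)
  refine ((hg.perspective.comp_affineMap shift).subset ?_
    (convex_halfSpace_ge (LinearMap.fst ℝ ℝ ℝ).isLinear 0)).congr fun x _ => ?_
  · intro x (hx : 0 ≤ x.1)
    exact ⟨show 0 < x.1 + κ by linarith, trivial⟩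
  · simp [shift, inv_mul_eq_div, add_comm, sub_eq_add_neg]

theorem ConvexOn.fun_sum {𝕜 E β ι : Type*} [Semiring 𝕜] [PartialOrder 𝕜] [AddCommMonoid E]
    [AddCommMonoid β] [PartialOrder β] [IsOrderedAddMonoid β] [SMul 𝕜 E] [Module 𝕜 β]
    {s : Set E} {t : Finset ι} {f : ι → E → β} (hs : Convex 𝕜 s)
    (hf : ∀ i ∈ t, ConvexOn 𝕜 s (f i)) :
    ConvexOn 𝕜 s fun x => ∑ i ∈ t, f i x := by
  classical
  induction t using Finset.induction_on with
  | empty => simpa using convexOn_const 0 hs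
  | insert i t hi ih =>
    simp only [Finset.sum_insert hi]
    exact (hf i (Finset.mem_insert_self i t)).add
      (ih fun j hj => hf j (Finset.mem_insert_of_mem hj))

theorem dual_objective_convex_general (n : ℕ) (p : Fin n → ℝ)
    (hp_pos : ∀ i, 0 < p i)
    (L : Fin n → ℝ) (ε κ : ℝ) (hκ : 0 < κ)
    (g : ℝ → ℝ) (hg : ConvexOn ℝ Set.univ g) :
    ConvexOn ℝ {x : ℝ × ℝ | 0 ≤ x.1}
      (fun x : ℝ × ℝ =>
        x.1 * ε + x.2 + (x.1 + κ) * ∑ i, p i * g ((L i - x.2) / (x.1 + κ))) := by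
  have hs : Convex ℝ {x : ℝ × ℝ | 0 ≤ x.1} :=
    convex_halfSpace_ge (LinearMap.fst ℝ ℝ ℝ).isLinear 0
  have hlinear := (ε • LinearMap.fst ℝ ℝ ℝ + LinearMap.snd ℝ ℝ ℝ).convexOn hs
  have hsum : ConvexOn ℝ {x : ℝ × ℝ | 0 ≤ x.1}
      fun x => ∑ i, p i • ((x.1 + κ) * g ((L i - x.2) / (x.1 + κ))) :=
    .fun_sum hs fun i _ => (hg.perspective_comp_shift hκ (L i)).smul (hp_pos i).le
  refine (hlinear.add hsum).congr fun x _ => ?_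
  simp only [Pi.add_apply, LinearMap.add_apply, LinearMap.smul_apply, LinearMap.fst_apply,
    LinearMap.snd_apply, smul_eq_mul, Finset.mul_sum]
  congr 1
  · ring
  · exact Finset.sum_congr rfl fun i _ => by ring

/-- Convexity of the f-divergence DRO dual objective in the pair `(λ, ρ)`
on the half-plane `{λ ≥ 0}`, for any convex integrand `g` (playing the role of `f*`). -/
theorem dual_objective_convex (n : ℕ) (hn : 1 ≤ n) (p : Fin n → ℝ)
    (hp_pos : ∀ i, 0 < p i) (hp_sum : ∑ i, p i = 1)
    (L : Fin n → ℝ) (ε κ : ℝ) (hε : 0 < ε) (hκ : 0 < κ)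
    (g : ℝ → ℝ) (hg : ConvexOn ℝ Set.univ g) :
    ConvexOn ℝ {x : ℝ × ℝ | 0 ≤ x.1}
      (fun x : ℝ × ℝ =>
        x.1 * ε + x.2 + (x.1 + κ) * ∑ i, p i * g ((L i - x.2) / (x.1 + κ))) :=
  dual_objective_convex_general n p hp_pos L ε κ hκ g hg
end

section
/- Let n ≥ 1, let p : Fin n → ℝ be a probability vector with p i > 0 for all i, let L : Fin n → ℝ, and let ε > 0 and κ > 0. Then the function A(λ) = λ·ε + (λ+κ) · log (Σ_i p i * exp (L i / (λ+κ))) is convex on [0, ∞). -/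
/-!
`A(λ) = λε + g(λ + κ)` with `g(t) = t f(1/t)` the perspective of the log-sum-exp function
`f(x) = log Σᵢ pᵢ e^{Lᵢ x}`. Hölder's inequality makes `f` convex, and the perspective of a convex
function on `(0, ∞)` is convex: for `t = a x + b y`, `1/t` is the convex combination of `1/x` and
`1/y` with weights `a x / t` and `b y / t`.
-/

open Finset Real Set

lemma Real.sum_rpow_mul_rpow_le {ι : Type*} (s : Finset ι) {u v : ι → ℝ}
    (hu : ∀ i ∈ s, 0 ≤ u i) (hv : ∀ i ∈ s, 0 ≤ v i) {a b : ℝ} (ha : 0 < a) (hb : 0 < b)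
    (hab : a + b = 1) :
    ∑ i ∈ s, u i ^ a * v i ^ b ≤ (∑ i ∈ s, u i) ^ a * (∑ i ∈ s, v i) ^ b := by
  have holder := inner_le_Lp_mul_Lq_of_nonneg s (holderConjugate_one_div ha hb hab)
    (fun i hi => rpow_nonneg (hu i hi) a) (fun i hi => rpow_nonneg (hv i hi) b)
  have hu' : ∀ i ∈ s, (u i ^ a) ^ (1 / a) = u i := fun i hi => by
    rw [← rpow_mul (hu i hi), mul_one_div_cancel ha.ne', rpow_one]
  have hv' : ∀ i ∈ s, (v i ^ b) ^ (1 / b) = v i := fun i hi => by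
    rw [← rpow_mul (hv i hi), mul_one_div_cancel hb.ne', rpow_one]
  rwa [sum_congr rfl hu', sum_congr rfl hv', one_div_one_div, one_div_one_div] at holder

theorem convexOn_log_sum_exp {ι : Type*} (s : Finset ι) {p : ι → ℝ} (hp : ∀ i ∈ s, 0 ≤ p i)
    (L : ι → ℝ) :
    ConvexOn ℝ univ (fun x : ℝ => log (∑ i ∈ s, p i * exp (L i * x))) := by
  by_cases hzero : ∀ i ∈ s, p i = 0
  · refine (convexOn_const 0 convex_univ).congr fun x _ => ?_
    rw [sum_eq_zero fun i hi => by rw [hzero i hi, zero_mul], log_zero]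
  push Not at hzero
  obtain ⟨j, hj, hpj⟩ := hzero
  have hterm : ∀ x, ∀ i ∈ s, 0 ≤ p i * exp (L i * x) := fun x i hi =>
    mul_nonneg (hp i hi) (exp_pos _).le
  have hS : ∀ x, 0 < ∑ i ∈ s, p i * exp (L i * x) := fun x =>
    sum_pos' (hterm x) ⟨j, hj, mul_pos ((hp j hj).lt_of_ne' hpj) (exp_pos _)⟩
  refine ⟨convex_univ, fun x _ y _ a b ha hb hab => ?_⟩
  rcases ha.eq_or_lt with rfl | ha
  · simp_all
  rcases hb.eq_or_lt with rfl | hb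
  · simp_all
  have hsplit : ∀ i ∈ s, p i * exp (L i * (a • x + b • y))
      = (p i * exp (L i * x)) ^ a * (p i * exp (L i * y)) ^ b := fun i hi => by
    rw [mul_rpow (hp i hi) (exp_pos _).le, mul_rpow (hp i hi) (exp_pos _).le, ← exp_mul,
      ← exp_mul, mul_mul_mul_comm, ← rpow_add_of_nonneg (hp i hi) ha.le hb.le, hab, rpow_one,
      ← exp_add, smul_eq_mul, smul_eq_mul]
    ring_nf
  calc log (∑ i ∈ s, p i * exp (L i * (a • x + b • y)))
      ≤ log ((∑ i ∈ s, p i * exp (L i * x)) ^ a * (∑ i ∈ s, p i * exp (L i * y)) ^ b) :=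
        log_le_log (hS _) ((sum_congr rfl hsplit).trans_le
          (sum_rpow_mul_rpow_le s (hterm x) (hterm y) ha hb hab))
    _ = a • log (∑ i ∈ s, p i * exp (L i * x)) + b • log (∑ i ∈ s, p i * exp (L i * y)) := by
        rw [log_mul (rpow_pos_of_pos (hS x) a).ne' (rpow_pos_of_pos (hS y) b).ne',
          log_rpow (hS x), log_rpow (hS y), smul_eq_mul, smul_eq_mul]

theorem ConvexOn.mul_comp_inv {f : ℝ → ℝ} (hf : ConvexOn ℝ (Ioi 0) f) :
    ConvexOn ℝ (Ioi 0) (fun t => t * f t⁻¹) := by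
  refine ⟨convex_Ioi 0, fun x (hx : 0 < x) y (hy : 0 < y) a b ha hb hab => ?_⟩
  have ht : 0 < a * x + b * y := convex_Ioi (0 : ℝ) hx hy ha hb hab
  have hweights : a * x / (a * x + b * y) + b * y / (a * x + b * y) = 1 := by
    rw [← add_div, div_self ht.ne']
  have hcombo : a * x / (a * x + b * y) * x⁻¹ + b * y / (a * x + b * y) * y⁻¹
      = (a * x + b * y)⁻¹ := by
    field_simp
    rw [hab]
  have hjensen := hf.2 (inv_pos.2 hx) (inv_pos.2 hy) (by positivity) (by positivity) hweights
  simp only [smul_eq_mul, hcombo] at hjensen ⊢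
  calc (a * x + b * y) * f (a * x + b * y)⁻¹
      ≤ (a * x + b * y) * (a * x / (a * x + b * y) * f x⁻¹ + b * y / (a * x + b * y) * f y⁻¹) :=
        mul_le_mul_of_nonneg_left hjensen ht.le
    _ = a * (x * f x⁻¹) + b * (y * f y⁻¹) := by field_simp

theorem kl_dual_objective_convex_general (n : ℕ) (p : Fin n → ℝ)
    (hp_pos : ∀ i, 0 < p i)
    (L : Fin n → ℝ) (ε κ : ℝ) (hκ : 0 < κ) :
    ConvexOn ℝ (Set.Ici (0 : ℝ))
      (fun lam : ℝ =>
        lam * ε + (lam + κ) * Real.log (∑ i, p i * Real.exp (L i / (lam + κ)))) := by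
  have hperspective := ((convexOn_log_sum_exp univ (fun i _ => (hp_pos i).le) L).subset
    (subset_univ _) (convex_Ioi 0)).mul_comp_inv
  have hshifted := (hperspective.translate_right κ).subset
    (fun lam (hlam : 0 ≤ lam) => show 0 < κ + lam by linarith) (convex_Ici 0)
  refine ((LinearMap.mulRight ℝ ε).convexOn (convex_Ici 0)).add hshifted |>.congr fun lam _ => ?_
  simp [add_comm κ, div_eq_mul_inv]

/-- Convexity of the KL-DRO dual objective `A(λ) = λ·ε + (λ+κ)·log Σᵢ pᵢ e^{Lᵢ/(λ+κ)}`
in the dual variable `λ` on `[0, ∞)`. -/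
theorem kl_dual_objective_convex (n : ℕ) (hn : 1 ≤ n) (p : Fin n → ℝ)
    (hp_pos : ∀ i, 0 < p i) (hp_sum : ∑ i, p i = 1)
    (L : Fin n → ℝ) (ε κ : ℝ) (hε : 0 < ε) (hκ : 0 < κ) :
    ConvexOn ℝ (Set.Ici (0 : ℝ))
      (fun lam : ℝ =>
        lam * ε + (lam + κ) * Real.log (∑ i, p i * Real.exp (L i / (lam + κ)))) :=
  kl_dual_objective_convex_general n p hp_pos L ε κ hκ
end

section
/- Let n ≥ 1, let p : Fin n → ℝ be a probability vector with p i > 0 for all i, and let L : Fin n → ℝ. Then for all real numbers 0 < s ≤ t one has Σ_i p i * L i ≤ t · log (Σ_i p i * exp (L i / t)) ≤ s · log (Σ_i p i * exp (L i / s)) ≤ max_i L i; that is, the map t ↦ t · log Σ_i p i e^{L i / t} is nonincreasing on (0, ∞) and takes values between the p-average and the maximum of L. -/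
/-- The scaled log-sum-exp `t ↦ t · log Σᵢ pᵢ e^{Lᵢ/t}` is nonincreasing on `(0, ∞)`
and takes values between the `p`-average of `L` and `maxᵢ Lᵢ`. -/
theorem logsumexp_monotone_interpolation (n : ℕ) (hn : 1 ≤ n) (p : Fin n → ℝ)
    (hp_pos : ∀ i, 0 < p i) (hp_sum : ∑ i, p i = 1) (L : Fin n → ℝ)
    (s t : ℝ) (hs : 0 < s) (hst : s ≤ t) :
    (∑ i, p i * L i) ≤ t * Real.log (∑ i, p i * Real.exp (L i / t)) ∧
    t * Real.log (∑ i, p i * Real.exp (L i / t)) ≤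
      s * Real.log (∑ i, p i * Real.exp (L i / s)) ∧
    s * Real.log (∑ i, p i * Real.exp (L i / s)) ≤ ⨆ i, L i := by
  have hnpty : Nonempty (Fin n) := Fin.pos_iff_nonempty.mp hn
  have ht : 0 < t := lt_of_lt_of_le hs hst
  have hsum_pos : ∀ u : ℝ, 0 < ∑ i, p i * Real.exp (L i / u) := fun u =>
    Finset.sum_pos (fun i _ => mul_pos (hp_pos i) (Real.exp_pos _)) Finset.univ_nonempty
  refine ⟨?_, ?_, ?_⟩
  · -- Jensen for exp: exp(Σ pᵢ (Lᵢ/t)) ≤ Σ pᵢ exp(Lᵢ/t)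
    have hjen := convexOn_exp.map_sum_le (t := Finset.univ) (w := p) (p := fun i => L i / t)
      (fun i _ => (hp_pos i).le) hp_sum (fun i _ => Set.mem_univ _)
    simp only [smul_eq_mul] at hjen
    have hlog : (∑ i, p i * (L i / t)) ≤ Real.log (∑ i, p i * Real.exp (L i / t)) :=
      (Real.le_log_iff_exp_le (hsum_pos t)).mpr hjen
    have heq : (∑ i, p i * (L i / t)) = (∑ i, p i * L i) / t := by
      rw [Finset.sum_div]; congr 1; ext i; ring
    rw [heq, div_le_iff₀ ht] at hlog
    linarith [hlog]
  · -- monotonicity via concavity of x ↦ x^(s/t)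
    set r : ℝ := s / t with hr
    have hr0 : 0 < r := div_pos hs ht
    have hr1 : r ≤ 1 := (div_le_one ht).mpr hst
    have hconc := (Real.concaveOn_rpow hr0.le hr1).le_map_sum (t := Finset.univ) (w := p)
      (p := fun i => Real.exp (L i / s)) (fun i _ => (hp_pos i).le) hp_sum
      (fun i _ => Set.mem_Ici.mpr (Real.exp_pos _).le)
    simp only [smul_eq_mul] at hconc
    have hpow : ∀ i, Real.exp (L i / s) ^ r = Real.exp (L i / t) := by
      intro i
      rw [Real.rpow_def_of_pos (Real.exp_pos _), Real.log_exp, hr]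
      congr 1
      field_simp
    have hconc' : (∑ i, p i * Real.exp (L i / t)) ≤ (∑ i, p i * Real.exp (L i / s)) ^ r := by
      refine le_trans (le_of_eq ?_) hconc
      exact Finset.sum_congr rfl fun i _ => by rw [hpow i]
    have hlog := Real.log_le_log (hsum_pos t) hconc'
    rw [Real.log_rpow (hsum_pos s)] at hlog
    calc t * Real.log (∑ i, p i * Real.exp (L i / t))
        ≤ t * (r * Real.log (∑ i, p i * Real.exp (L i / s))) := by
          exact mul_le_mul_of_nonneg_left hlog ht.le
      _ = s * Real.log (∑ i, p i * Real.exp (L i / s)) := by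
          rw [hr]; field_simp
  · -- upper bound by the sup
    have hbdd : ∀ i, L i ≤ ⨆ j, L j := fun i =>
      le_ciSup (Set.Finite.bddAbove (Set.finite_range L)) i
    have hsum_le : (∑ i, p i * Real.exp (L i / s)) ≤ Real.exp ((⨆ j, L j) / s) := by
      calc (∑ i, p i * Real.exp (L i / s))
          ≤ ∑ i, p i * Real.exp ((⨆ j, L j) / s) := by
            refine Finset.sum_le_sum fun i _ => ?_
            exact mul_le_mul_of_nonneg_left
              (Real.exp_le_exp.mpr (div_le_div_of_nonneg_right (hbdd i) hs.le)) (hp_pos i).le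
        _ = Real.exp ((⨆ j, L j) / s) := by rw [← Finset.sum_mul, hp_sum, one_mul]
    have hlog : Real.log (∑ i, p i * Real.exp (L i / s)) ≤ (⨆ j, L j) / s :=
      (Real.log_le_iff_le_exp (hsum_pos s)).mpr hsum_le
    calc s * Real.log (∑ i, p i * Real.exp (L i / s)) ≤ s * ((⨆ j, L j) / s) :=
          mul_le_mul_of_nonneg_left hlog hs.le
      _ = ⨆ j, L j := by field_simp
end

section
/- Let n ≥ 1, let p : Fin n → ℝ be a probability vector with p i > 0 for all i, let L : Fin n → ℝ, let f : ℝ → ℝ be convex with f 1 = 0, define D_f(q‖p) = Σ_i p i * f (q i / p i) for probability vectors q on Fin n, and let ε > 0 and κ > 0. Then sup { Σ_i q i * L i − κ · D_f(q‖p) : q a probability vector on Fin n with D_f(q‖p) ≤ ε } = inf over λ ≥ 0 of ( λ·ε + sup { Σ_i q i * L i − (λ+κ) · D_f(q‖p) : q a probability vector on Fin n } ), where the equality is in the extended reals. -/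
/-!
Weak duality is immediate. For the converse, let `V` be the constrained supremum (if it is `⊤`
there is nothing to show). The set of pairs `(u, t)` with `D q < u` and `t < g q` for some
`q ∈ K` is open and convex (convexity of `D`, concavity of `g`) and misses `(ε, V)`, so a linear
functional `(u, t) ↦ a u + b t` separates them. Letting `u → ∞` and `t → -∞` gives `a ≤ 0 ≤ b`,
and the Slater point rules out `b = 0`; then `λ = -a / b` satisfies `g - λ D ≤ V - λ ε` on `K`.
The f-divergence `q ↦ D_f(q‖p)` is convex and vanishes at `q = p`, so the theorem is the case
`K` = simplex, `D = D_f(·‖p)`, `g q = ⟨q, L⟩ - κ D_f(q‖p)`.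
-/

open Set Filter Topology

lemma nonpos_of_forall_pos_mul_lt {a c : ℝ} (h : ∀ m > 0, m * a < c) : a ≤ 0 := by
  by_contra! ha
  have := h ((|c| + 1) / a) (by positivity)
  rw [div_mul_cancel₀ _ ha.ne'] at this
  linarith [le_abs_self c]

lemma combo_lt_combo {a b x₁ x₂ y₁ y₂ : ℝ} (ha : 0 ≤ a) (hb : 0 ≤ b) (hab : a + b = 1)
    (h₁ : x₁ < y₁) (h₂ : x₂ < y₂) : a * x₁ + b * x₂ < a * y₁ + b * y₂ := by
  have := convex_Ioi (0 : ℝ) (sub_pos.2 h₁) (sub_pos.2 h₂) ha hb hab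
  simp only [mem_Ioi, smul_eq_mul] at this
  linarith

section LagrangeDuality

variable {E : Type*} {K : Set E} {D g : E → ℝ}

lemma sSup_feasible_le_lagrangian {ε lam : ℝ} (hlam : 0 ≤ lam) :
    sSup {x : EReal | ∃ q ∈ K, D q ≤ ε ∧ x = g q} ≤
      ((lam * ε : ℝ) : EReal) + sSup {y : EReal | ∃ q ∈ K, y = ((g q - lam * D q : ℝ) : EReal)} := by
  refine sSup_le ?_
  rintro _ ⟨q, hq, hDq, rfl⟩
  calc ((g q : ℝ) : EReal) = ((lam * ε : ℝ) : EReal) + ((g q - lam * ε : ℝ) : EReal) := by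
        rw [← EReal.coe_add, add_sub_cancel]
    _ ≤ ((lam * ε : ℝ) : EReal) + ((g q - lam * D q : ℝ) : EReal) := by gcongr
    _ ≤ _ := by gcongr; exact le_sSup ⟨q, hq, rfl⟩

def lagrangeRegion (K : Set E) (D g : E → ℝ) : Set (ℝ × ℝ) :=
  ⋃ q ∈ K, Ioi (D q) ×ˢ Iio (g q)

lemma mem_lagrangeRegion {z : ℝ × ℝ} :
    z ∈ lagrangeRegion K D g ↔ ∃ q ∈ K, D q < z.1 ∧ z.2 < g q := by
  simp only [lagrangeRegion, mem_iUnion₂, mem_prod, mem_Ioi, mem_Iio, exists_prop]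

lemma isOpen_lagrangeRegion : IsOpen (lagrangeRegion K D g) :=
  isOpen_biUnion fun _ _ => isOpen_Ioi.prod isOpen_Iio

variable [AddCommGroup E] [Module ℝ E]

lemma convex_lagrangeRegion (hD : ConvexOn ℝ K D) (hg : ConcaveOn ℝ K g) :
    Convex ℝ (lagrangeRegion K D g) := by
  rintro z₁ hz₁ z₂ hz₂ a b ha hb hab
  obtain ⟨q₁, hq₁, hD₁, hg₁⟩ := mem_lagrangeRegion.1 hz₁
  obtain ⟨q₂, hq₂, hD₂, hg₂⟩ := mem_lagrangeRegion.1 hz₂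
  refine mem_lagrangeRegion.2 ⟨a • q₁ + b • q₂, hD.1 hq₁ hq₂ ha hb hab, ?_, ?_⟩
  · calc D (a • q₁ + b • q₂) ≤ a * D q₁ + b * D q₂ := hD.2 hq₁ hq₂ ha hb hab
      _ < a * z₁.1 + b * z₂.1 := combo_lt_combo ha hb hab hD₁ hD₂
      _ = (a • z₁ + b • z₂).1 := rfl
  · calc (a • z₁ + b • z₂).2 = a * z₁.2 + b * z₂.2 := rfl
      _ < a * g q₁ + b * g q₂ := combo_lt_combo ha hb hab hg₁ hg₂
      _ ≤ g (a • q₁ + b • q₂) := hg.2 hq₁ hq₂ ha hb hab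

lemma ConvexOn.exists_lagrange_multiplier (hD : ConvexOn ℝ K D) (hg : ConcaveOn ℝ K g)
    {p₀ : E} (hp₀ : p₀ ∈ K) {ε V : ℝ} (hslater : D p₀ < ε)
    (hV : ∀ q ∈ K, D q ≤ ε → g q ≤ V) :
    ∃ lam : ℝ, 0 ≤ lam ∧ ∀ q ∈ K, g q - lam * D q ≤ V - lam * ε := by
  have hout : (ε, V) ∉ lagrangeRegion K D g := fun h => by
    obtain ⟨q, hq, hDq, hgq⟩ := mem_lagrangeRegion.1 h
    exact (hV q hq hDq.le).not_gt hgq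
  obtain ⟨φ, hφ⟩ :=
    geometric_hahn_banach_open_point (convex_lagrangeRegion hD hg) isOpen_lagrangeRegion hout
  set a := φ (1, 0)
  set b := φ (0, 1)
  have hφ_apply (u t : ℝ) : φ (u, t) = a * u + b * t := by
    rw [show ((u, t) : ℝ × ℝ) = u • (1, 0) + t • (0, 1) by simp, map_add, map_smul, map_smul,
      smul_eq_mul, smul_eq_mul]
    ring
  have hsep (q : E) (hq : q ∈ K) (u t : ℝ) (hu : D q < u) (ht : t < g q) :
      a * u + b * t < a * ε + b * V := by
    simpa only [hφ_apply] using hφ (u, t) (mem_lagrangeRegion.2 ⟨q, hq, hu, ht⟩)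
  have ha : a ≤ 0 := nonpos_of_forall_pos_mul_lt (c := a * ε + b * V - a * D p₀ - b * (g p₀ - 1))
    fun m hm => by linarith [hsep p₀ hp₀ (D p₀ + m) (g p₀ - 1) (by linarith) (by linarith)]
  have hb : 0 < b := by
    have hb₀ : 0 ≤ b := neg_nonpos.1 <|
      nonpos_of_forall_pos_mul_lt (c := a * ε + b * V - a * (D p₀ + 1) - b * g p₀)
        fun m hm => by linarith [hsep p₀ hp₀ (D p₀ + 1) (g p₀ - m) (by linarith) (by linarith)]
    -- Slater: the point `(ε, g p₀ - 1)` lies in the region, which rules out a vertical separator.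
    have := hsep p₀ hp₀ ε (g p₀ - 1) hslater (by linarith)
    exact hb₀.lt_of_ne fun h => by rw [← h] at this; linarith
  have hclosure (q : E) (hq : q ∈ K) : a * D q + b * g q ≤ a * ε + b * V := by
    have hlim : Tendsto (fun s : ℝ => a * (D q + s) + b * (g q - s)) (𝓝[>] 0)
        (𝓝 (a * D q + b * g q)) :=
      ((by fun_prop : Continuous fun s : ℝ => a * (D q + s) + b * (g q - s)).tendsto' 0 _
        (by simp)).mono_left nhdsWithin_le_nhds
    exact le_of_tendsto hlim <| eventually_nhdsWithin_of_forall fun s hs =>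
      (hsep q hq _ _ (lt_add_of_pos_right _ hs) (sub_lt_self _ hs)).le
  refine ⟨-a / b, div_nonneg (neg_nonneg.2 ha) hb.le, fun q hq => ?_⟩
  have := hclosure q hq
  rw [← mul_le_mul_iff_right₀ hb]
  field_simp
  linarith

theorem sSup_feasible_eq_sInf_lagrangian (hD : ConvexOn ℝ K D) (hg : ConcaveOn ℝ K g)
    {p₀ : E} (hp₀ : p₀ ∈ K) {ε : ℝ} (hslater : D p₀ < ε) :
    sSup {x : EReal | ∃ q ∈ K, D q ≤ ε ∧ x = g q} =
      sInf {x : EReal | ∃ lam : ℝ, 0 ≤ lam ∧ x = ((lam * ε : ℝ) : EReal) +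
        sSup {y : EReal | ∃ q ∈ K, y = ((g q - lam * D q : ℝ) : EReal)}} := by
  set M := sSup {x : EReal | ∃ q ∈ K, D q ≤ ε ∧ x = g q}
  refine le_antisymm (le_sInf ?_) ?_
  · rintro _ ⟨lam, hlam, rfl⟩
    exact sSup_feasible_le_lagrangian hlam
  obtain hM_top | hM_top := eq_or_ne M ⊤
  · exact hM_top ▸ le_top
  have hM_bot : M ≠ ⊥ :=
    ne_bot_of_le_ne_bot (EReal.coe_ne_bot (g p₀)) (le_sSup ⟨p₀, hp₀, hslater.le, rfl⟩)
  have hM : ((M.toReal : ℝ) : EReal) = M := EReal.coe_toReal hM_top hM_bot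
  obtain ⟨lam, hlam, hmult⟩ := hD.exists_lagrange_multiplier hg hp₀ hslater (V := M.toReal)
    fun q hq hDq => EReal.coe_le_coe_iff.1 <| by rw [hM]; exact le_sSup ⟨q, hq, hDq, rfl⟩
  refine sInf_le_of_le ⟨lam, hlam, rfl⟩ ?_
  calc ((lam * ε : ℝ) : EReal) + sSup {y : EReal | ∃ q ∈ K, y = ((g q - lam * D q : ℝ) : EReal)}
      ≤ ((lam * ε : ℝ) : EReal) + ((M.toReal - lam * ε : ℝ) : EReal) := by
        gcongr
        refine sSup_le ?_
        rintro _ ⟨q, hq, rfl⟩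
        exact EReal.coe_le_coe_iff.2 (hmult q hq)
    _ = M := by rw [← EReal.coe_add, add_sub_cancel, hM]

end LagrangeDuality

section FDivergence

variable {ι : Type*} [Fintype ι]

noncomputable def fDiv (f : ℝ → ℝ) (q p : ι → ℝ) : ℝ := ∑ i, p i * f (q i / p i)

lemma fDiv_self {f : ℝ → ℝ} (hf₁ : f 1 = 0) {p : ι → ℝ} (hp : ∀ i, p i ≠ 0) : fDiv f p p = 0 :=
  Finset.sum_eq_zero fun i _ => by rw [div_self (hp i), hf₁, mul_zero]

lemma convexOn_fDiv {f : ℝ → ℝ} (hf : ConvexOn ℝ univ f) {p : ι → ℝ} (hp : ∀ i, 0 ≤ p i) :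
    ConvexOn ℝ univ fun q => fDiv f q p := by
  refine ⟨convex_univ, fun q₁ _ q₂ _ a b ha hb hab => ?_⟩
  simp only [fDiv, smul_eq_mul, Finset.mul_sum, ← Finset.sum_add_distrib]
  refine Finset.sum_le_sum fun i _ => ?_
  have hcomb : (a • q₁ + b • q₂) i / p i = a * (q₁ i / p i) + b * (q₂ i / p i) := by
    simp only [Pi.add_apply, Pi.smul_apply, smul_eq_mul]
    ring
  calc p i * f ((a • q₁ + b • q₂) i / p i)
      ≤ p i * (a * f (q₁ i / p i) + b * f (q₂ i / p i)) := by
        rw [hcomb]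
        exact mul_le_mul_of_nonneg_left (hf.2 trivial trivial ha hb hab) (hp i)
    _ = a * (p i * f (q₁ i / p i)) + b * (p i * f (q₂ i / p i)) := by ring

end FDivergence

theorem f_dro_strong_duality_general (n : ℕ) (p : Fin n → ℝ)
    (hp_pos : ∀ i, 0 < p i) (hp_sum : ∑ i, p i = 1)
    (L : Fin n → ℝ) (f : ℝ → ℝ) (hf : ConvexOn ℝ Set.univ f) (hf1 : f 1 = 0)
    (ε κ : ℝ) (hε : 0 < ε) (hκ : 0 < κ) :
    sSup {x : EReal | ∃ q : Fin n → ℝ, (∀ i, 0 ≤ q i) ∧ (∑ i, q i = 1) ∧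
        (∑ i, p i * f (q i / p i)) ≤ ε ∧
        x = (((∑ i, q i * L i) - κ * (∑ i, p i * f (q i / p i)) : ℝ) : EReal)} =
    sInf {x : EReal | ∃ lam : ℝ, 0 ≤ lam ∧
        x = ((lam * ε : ℝ) : EReal) +
            sSup {y : EReal | ∃ q : Fin n → ℝ, (∀ i, 0 ≤ q i) ∧ (∑ i, q i = 1) ∧
              y = (((∑ i, q i * L i) - (lam + κ) * (∑ i, p i * f (q i / p i)) : ℝ) : EReal)}} := by
  have hD : ConvexOn ℝ (stdSimplex ℝ (Fin n)) fun q => fDiv f q p :=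
    (convexOn_fDiv hf fun i => (hp_pos i).le).subset (subset_univ _) (convex_stdSimplex ℝ _)
  have hg : ConcaveOn ℝ (stdSimplex ℝ (Fin n)) fun q => ∑ i, q i * L i - κ * fDiv f q p :=
    ((Fintype.linearCombination ℝ L).concaveOn (convex_stdSimplex ℝ _)).sub (hD.smul hκ.le)
  have hslater : fDiv f p p < ε := by rwa [fDiv_self hf1 fun i => (hp_pos i).ne']
  have := sSup_feasible_eq_sInf_lagrangian hD hg ⟨fun i => (hp_pos i).le, hp_sum⟩ hslater
  have hpenalty (lam : ℝ) (q : Fin n → ℝ) : ∑ i, q i * L i - κ * fDiv f q p - lam * fDiv f q p =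
      ∑ i, q i * L i - (lam + κ) * fDiv f q p := by ring
  simp only [hpenalty] at this
  simpa only [stdSimplex, mem_ofPred_eq, and_assoc, fDiv] using this

/-- Strong duality (Lagrangian / Slater step) in the proof of Theorem A.1: the
constrained supremum of the `κ`-penalized objective over the f-divergence ball of
radius `ε` equals the infimum over the Lagrange multiplier `λ ≥ 0` of `λ·ε` plus the
unconstrained `(λ+κ)`-penalized supremum, in the extended reals. -/
theorem f_dro_strong_duality (n : ℕ) (hn : 1 ≤ n) (p : Fin n → ℝ)
    (hp_pos : ∀ i, 0 < p i) (hp_sum : ∑ i, p i = 1)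
    (L : Fin n → ℝ) (f : ℝ → ℝ) (hf : ConvexOn ℝ Set.univ f) (hf1 : f 1 = 0)
    (ε κ : ℝ) (hε : 0 < ε) (hκ : 0 < κ) :
    sSup {x : EReal | ∃ q : Fin n → ℝ, (∀ i, 0 ≤ q i) ∧ (∑ i, q i = 1) ∧
        (∑ i, p i * f (q i / p i)) ≤ ε ∧
        x = (((∑ i, q i * L i) - κ * (∑ i, p i * f (q i / p i)) : ℝ) : EReal)} =
    sInf {x : EReal | ∃ lam : ℝ, 0 ≤ lam ∧
        x = ((lam * ε : ℝ) : EReal) +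
            sSup {y : EReal | ∃ q : Fin n → ℝ, (∀ i, 0 ≤ q i) ∧ (∑ i, q i = 1) ∧
              y = (((∑ i, q i * L i) - (lam + κ) * (∑ i, p i * f (q i / p i)) : ℝ) : EReal)}} :=
  f_dro_strong_duality_general n p hp_pos hp_sum L f hf hf1 ε κ hε hκ
end
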